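/- Define E : [0,∞) × [0,1] → [0,1] by the supremum, over nonnegative f on I=[0,1) with ⟨f⟩_I = x and Carleson sequences α with constant ≤ 1 and ∑_{J}α_J|J| = y, of |{t ∈ I : ∑_J α_J⟨f⟩_J 1_J(t) > 1}|. Then E satisfies, for any λ ∈ (0,1]: E(x, y) ≥ λ·E(x/λ, y/λ) whenever (x/λ, y/λ) lies in the domain. -/

import Mathlib

open MeasureTheory

noncomputable section

/-- The dyadic subinterval of `[0,1)` at generation `n` with index `k` (for `k < 2ⁿ`):
`[k/2ⁿ, (k+1)/2ⁿ)`. -/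
def dyadIco (n k : ℕ) : Set ℝ := Set.Ico ((k : ℝ) / 2 ^ n) (((k : ℝ) + 1) / 2 ^ n)

/-- The average `⟨f⟩_J` of `f` over the dyadic interval `J` indexed by `(n,k)`. -/
def dyadAvg (f : ℝ → ℝ) (n k : ℕ) : ℝ := (2 : ℝ) ^ n * ∫ t in dyadIco n k, f t

/-- `(m,j)` indexes a dyadic subinterval of the dyadic interval indexed by `(n,k)`. -/
def dyadMem (n k m j : ℕ) : Prop :=
  n ≤ m ∧ k * 2 ^ (m - n) ≤ j ∧ j < (k + 1) * 2 ^ (m - n)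

/-- The positive dyadic shift (Lerner operator)
`𝓐f = ∑_{J ∈ 𝒟([0,1))} α_J ⟨f⟩_J 1_J`, with `α_J` indexed as `α n k`. -/
def shiftOp (α : ℕ → ℕ → ℝ) (f : ℝ → ℝ) (t : ℝ) : ℝ :=
  ∑' p : ℕ × ℕ, α p.1 p.2 * dyadAvg f p.1 p.2 * (dyadIco p.1 p.2).indicator 1 t

/-- The sequence `α` has Carleson constant at most `1`:
for every dyadic `J ⊆ [0,1)`, `(1/|J|) ∑_{K ∈ 𝒟(J)} α_K |K| ≤ 1`. -/
def CarlesonLeOne (α : ℕ → ℕ → ℝ) : Prop :=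
  ∀ n k : ℕ, k < 2 ^ n →
    (∑' p : ℕ × ℕ,
        {q : ℕ × ℕ | dyadMem n k q.1 q.2}.indicator
          (fun q => α q.1 q.2 * ((2 : ℝ) ^ q.1)⁻¹) p) ≤ ((2 : ℝ) ^ n)⁻¹

/-- The total mass `(1/|I|) ∑_{J ∈ 𝒟(I)} α_J |J|` of the sequence `α` on `I = [0,1)`. -/
def totalMass (α : ℕ → ℕ → ℝ) : ℝ := ∑' p : ℕ × ℕ, α p.1 p.2 * ((2 : ℝ) ^ p.1)⁻¹

/-- The admissible pairs `(f, α)` for the Bellman point `(x, y, 1)`: `f` nonnegative and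
integrable on `I = [0,1)` with `⟨f⟩_I = x`, and `α` a nonnegative sequence indexed by the
dyadic subintervals of `I`, with Carleson constant at most `1` and total mass `y`. -/
def Admissible (x y : ℝ) (f : ℝ → ℝ) (α : ℕ → ℕ → ℝ) : Prop :=
  (∀ t, 0 ≤ f t) ∧ IntegrableOn f (Set.Ico (0:ℝ) 1) ∧ dyadAvg f 0 0 = x ∧
  (∀ n k, 0 ≤ α n k) ∧ (∀ n k, 2 ^ n ≤ k → α n k = 0) ∧ CarlesonLeOne α ∧
  totalMass α = y

/-- The Bellman function `E(x,y) = 𝔹(x,y,1)`: the supremum over admissible `(f, α)` of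
`|{t ∈ [0,1) : 𝓐f(t) > 1}|`. -/
def BellmanE (x y : ℝ) : ℝ :=
  sSup {r : ℝ | ∃ f α, Admissible x y f α ∧
    r = (volume {t ∈ Set.Ico (0:ℝ) 1 | 1 < shiftOp α f t}).toReal}

end

/-!
Glue an admissible pair for `(x₁, y₁)` onto `[0, 1/2)` and one for `(x₂, y₂)` onto `[1/2, 1)`
(through `t ↦ 2t` and `t ↦ 2t - 1`, with weight `0` on `[0,1)` itself). The result is admissible
for the midpoint, its shift restricted to either half is the rescaled shift of that half, and so
its superlevel set has the average measure. Hence `g a = E(a x, a y)` satisfies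
`g a / 2 ≤ g (a / 2)` and `(g 1 + g a) / 2 ≤ g ((1 + a) / 2)`. Following the binary digits of `λ`,
these give `⌊2ᴺ λ⌋ / 2ᴺ · g 1 ≤ g λ` for every `N`, and `N → ∞` gives `λ · g 1 ≤ g λ`.
-/

open MeasureTheory Set Function Filter Topology
open scoped ENNReal

lemma floor_mul_div_mul_le_of_half_le_of_midpoint_le {g : ℝ → ℝ}
    (h0 : ∀ a ∈ Icc (0 : ℝ) 1, 0 ≤ g a) (hhalf : ∀ a ∈ Icc (0 : ℝ) 1, g a / 2 ≤ g (a / 2))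
    (hmid : ∀ a ∈ Ioc (0 : ℝ) 1, (g 1 + g a) / 2 ≤ g ((1 + a) / 2)) (N : ℕ) :
    ∀ a ∈ Icc (0 : ℝ) 1, (⌊a * 2 ^ N⌋₊ / 2 ^ N : ℝ) * g 1 ≤ g a := by
  induction N with
  | zero =>
    rintro a ⟨ha₀, ha₁⟩
    rcases ha₁.lt_or_eq with ha₁ | rfl
    · simp [Nat.floor_eq_zero.2 ha₁, h0 a ⟨ha₀, ha₁.le⟩]
    · simp
  | succ N ih =>
    rintro a ⟨ha₀, ha₁⟩
    rcases le_or_gt a (1 / 2) with h | h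
    · have hdouble := hhalf (2 * a) ⟨by linarith, by linarith⟩
      rw [mul_div_cancel_left₀ a two_ne_zero] at hdouble
      calc (⌊a * 2 ^ (N + 1)⌋₊ / 2 ^ (N + 1) : ℝ) * g 1
          = (⌊2 * a * 2 ^ N⌋₊ / 2 ^ N : ℝ) * g 1 / 2 := by ring_nf
        _ ≤ g (2 * a) / 2 := by gcongr; exact ih _ ⟨by linarith, by linarith⟩
        _ ≤ g a := hdouble
    · have hb : 2 * a - 1 ∈ Ioc (0 : ℝ) 1 := ⟨by linarith, by linarith⟩
      have hsplit := hmid _ hb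
      rw [show (1 + (2 * a - 1)) / 2 = a by ring] at hsplit
      have hfloor : (⌊a * 2 ^ (N + 1)⌋₊ : ℝ) = ⌊(2 * a - 1) * 2 ^ N⌋₊ + 2 ^ N := by
        have := Nat.floor_add_natCast (mul_nonneg hb.1.le (pow_nonneg zero_le_two N)) (2 ^ N)
        push_cast at this
        rw [show a * 2 ^ (N + 1) = (2 * a - 1) * 2 ^ N + 2 ^ N by ring, this]
        push_cast
        ring
      calc (⌊a * 2 ^ (N + 1)⌋₊ / 2 ^ (N + 1) : ℝ) * g 1
          = (g 1 + (⌊(2 * a - 1) * 2 ^ N⌋₊ / 2 ^ N : ℝ) * g 1) / 2 := by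
            rw [hfloor, pow_succ]; field_simp; ring
        _ ≤ (g 1 + g (2 * a - 1)) / 2 := by gcongr; exact ih _ ⟨hb.1.le, hb.2⟩
        _ ≤ g a := hsplit

theorem mul_le_of_half_le_of_midpoint_le {g : ℝ → ℝ} (h0 : ∀ a ∈ Icc (0 : ℝ) 1, 0 ≤ g a)
    (hhalf : ∀ a ∈ Icc (0 : ℝ) 1, g a / 2 ≤ g (a / 2))
    (hmid : ∀ a ∈ Ioc (0 : ℝ) 1, (g 1 + g a) / 2 ≤ g ((1 + a) / 2)) {a : ℝ} (ha : a ∈ Icc 0 1) :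
    a * g 1 ≤ g a := by
  have hlim : Tendsto (fun N : ℕ => (⌊a * 2 ^ N⌋₊ / 2 ^ N : ℝ) * g 1) atTop (𝓝 (a * g 1)) :=
    ((tendsto_nat_floor_mul_div_atTop ha.1).comp
      (tendsto_pow_atTop_atTop_of_one_lt one_lt_two)).mul_const _
  exact le_of_tendsto' hlim fun N =>
    floor_mul_div_mul_le_of_half_le_of_midpoint_le h0 hhalf hmid N a ha

-- The index of the image of the dyadic interval `p` under `t ↦ (t + i) / 2`.
def dyadChild (i : ℕ) (p : ℕ × ℕ) : ℕ × ℕ := (p.1 + 1, i * 2 ^ p.1 + p.2)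

lemma dyadChild_injective (i : ℕ) : Injective (dyadChild i) := by
  rintro ⟨m, j⟩ ⟨m', j'⟩ h
  simp only [dyadChild, Prod.mk.injEq, add_left_inj] at h
  obtain ⟨rfl, h⟩ := h
  simp_all

lemma measurableSet_dyadIco (n k : ℕ) : MeasurableSet (dyadIco n k) :=
  measurableSet_Ico

lemma dyadIco_zero_zero : dyadIco 0 0 = Ico 0 1 := by
  simp [dyadIco]

lemma dyadIco_succ_eq_preimage (i n k : ℕ) :
    dyadIco (n + 1) (i * 2 ^ n + k) = (fun t : ℝ => 2 * t - i) ⁻¹' dyadIco n k := by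
  have h₁ : ((i * 2 ^ n + k : ℕ) : ℝ) / 2 ^ (n + 1) = (k / 2 ^ n + i) / 2 := by
    push_cast; field_simp; ring
  have h₂ : ((i * 2 ^ n + k : ℕ) + 1 : ℝ) / 2 ^ (n + 1) = ((k + 1) / 2 ^ n + i) / 2 := by
    push_cast; field_simp; ring
  ext t
  simp only [dyadIco, mem_preimage, mem_Ico, h₁, h₂]
  constructor <;> rintro ⟨h₁, h₂⟩ <;> constructor <;> linarith

lemma dyadIco_subset_Ico {n k : ℕ} (hk : k < 2 ^ n) : dyadIco n k ⊆ Ico 0 1 := by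
  have hk' : (k : ℝ) + 1 ≤ 2 ^ n := by exact_mod_cast hk
  rintro t ⟨h₁, h₂⟩
  exact ⟨(by positivity : (0 : ℝ) ≤ k / 2 ^ n).trans h₁,
    h₂.trans_le ((div_le_one (by positivity)).2 hk')⟩

lemma dyadMem_zero_zero_iff {m j : ℕ} : dyadMem 0 0 m j ↔ j < 2 ^ m := by
  simp [dyadMem]

lemma dyadMem.lt_two_pow {n k m j : ℕ} (h : dyadMem n k m j) (hk : k < 2 ^ n) : j < 2 ^ m := by
  obtain ⟨hnm, -, hj⟩ := h
  calc j < (k + 1) * 2 ^ (m - n) := hj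
    _ ≤ 2 ^ n * 2 ^ (m - n) := Nat.mul_le_mul_right _ hk
    _ = 2 ^ m := by rw [← pow_add, Nat.add_sub_cancel' hnm]

lemma dyadMem_of_nonempty_inter {n k m j : ℕ} (hnm : n ≤ m)
    (h : (dyadIco n k ∩ dyadIco m j).Nonempty) : dyadMem n k m j := by
  obtain ⟨t, ⟨hk₁, hk₂⟩, hj₁, hj₂⟩ := h
  have hpow : 2 ^ m = 2 ^ (m - n) * 2 ^ n := by rw [← pow_add, Nat.sub_add_cancel hnm]
  have cross : ∀ {a b c d : ℕ}, (a : ℝ) / 2 ^ c < (b + 1) / 2 ^ d →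
      a * 2 ^ d < (b + 1) * 2 ^ c := by
    intro a b c d hab
    rw [div_lt_div_iff₀ (by positivity) (by positivity)] at hab
    exact_mod_cast hab
  have h₁ := cross (hk₁.trans_lt hj₂)
  have h₂ := cross (hj₁.trans_lt hk₂)
  rw [hpow, ← mul_assoc] at h₁ h₂
  exact ⟨hnm, Nat.lt_succ_iff.1 (Nat.lt_of_mul_lt_mul_right h₁), Nat.lt_of_mul_lt_mul_right
    (by rwa [mul_comm (b := 2 ^ (m - n))] at h₂)⟩

lemma dyadMem_dyadChild_iff (i n k m j : ℕ) :
    dyadMem (n + 1) (i * 2 ^ n + k) (m + 1) (i * 2 ^ m + j) ↔ dyadMem n k m j := by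
  simp only [dyadMem, Nat.add_sub_add_right, add_le_add_iff_right]
  refine and_congr_right fun hnm => ?_
  have hpow : 2 ^ n * 2 ^ (m - n) = 2 ^ m := by rw [← pow_add, Nat.add_sub_cancel' hnm]
  have : i * 2 ^ m = i * 2 ^ n * 2 ^ (m - n) := by rw [mul_assoc, hpow]
  constructor <;> rintro ⟨h₁, h₂⟩ <;> refine ⟨?_, ?_⟩ <;> nlinarith

lemma mem_range_dyadChild {i n k : ℕ} {p : ℕ × ℕ} (h : dyadMem (n + 1) (i * 2 ^ n + k) p.1 p.2) :
    p ∈ range (dyadChild i) := by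
  obtain ⟨m, j⟩ := p
  obtain ⟨hnm, hj, -⟩ := h
  obtain ⟨m, rfl⟩ := Nat.exists_eq_add_of_le' (le_of_add_le_right hnm)
  have hij : i * 2 ^ m ≤ j := calc
    i * 2 ^ m = i * 2 ^ n * 2 ^ (m + 1 - (n + 1)) := by
      rw [mul_assoc, ← pow_add]; congr 2; omega
    _ ≤ (i * 2 ^ n + k) * 2 ^ (m + 1 - (n + 1)) := by gcongr; omega
    _ ≤ j := hj
  exact ⟨(m, j - i * 2 ^ m), by simp [dyadChild, Nat.add_sub_cancel' hij]⟩

lemma measurableEmbedding_two_mul_sub (c : ℝ) : MeasurableEmbedding fun t : ℝ => 2 * t - c := by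
  convert (affineHomeomorph (2 : ℝ) (-c) two_ne_zero).measurableEmbedding using 1
  ext t
  simp [sub_eq_add_neg]

lemma map_volume_two_mul_sub (c : ℝ) :
    volume.map (fun t : ℝ => 2 * t - c) = (2 : ℝ≥0∞)⁻¹ • volume := by
  have : (fun t : ℝ => 2 * t - c) = (· + -c) ∘ (2 * ·) := by
    ext t; simp [sub_eq_add_neg]
  rw [this, ← Measure.map_map (by fun_prop) (by fun_prop), Real.map_volume_mul_left two_ne_zero,
    Measure.map_smul, map_add_right_eq_self, abs_of_pos (by norm_num),
    ENNReal.ofReal_inv_of_pos two_pos, ENNReal.ofReal_ofNat]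

lemma volume_preimage_two_mul_sub (c : ℝ) (s : Set ℝ) :
    volume ((fun t : ℝ => 2 * t - c) ⁻¹' s) = volume s / 2 := by
  rw [← (measurableEmbedding_two_mul_sub c).map_apply, map_volume_two_mul_sub, Measure.smul_apply,
    smul_eq_mul, ENNReal.div_eq_inv_mul]

lemma setIntegral_preimage_two_mul_sub (g : ℝ → ℝ) (c : ℝ) (s : Set ℝ) :
    ∫ t in (fun t : ℝ => 2 * t - c) ⁻¹' s, g (2 * t - c) = (∫ t in s, g t) / 2 := by
  rw [← (measurableEmbedding_two_mul_sub c).setIntegral_map, map_volume_two_mul_sub,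
    Measure.restrict_smul, integral_smul_measure]
  simp [div_eq_inv_mul]

lemma integrableOn_comp_two_mul_sub {g : ℝ → ℝ} {s : Set ℝ} (hg : IntegrableOn g s) (c : ℝ) :
    IntegrableOn (fun t => g (2 * t - c)) ((fun t : ℝ => 2 * t - c) ⁻¹' s) := by
  refine (measurableEmbedding_two_mul_sub c).integrableOn_map_iff.1 ?_
  rw [map_volume_two_mul_sub]
  rw [IntegrableOn, Measure.restrict_smul]
  exact hg.smul_measure (ENNReal.inv_ne_top.2 two_ne_zero)

lemma dyadIco_one_eq_preimage (i : ℕ) :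
    dyadIco 1 i = (fun t : ℝ => 2 * t - i) ⁻¹' Ico 0 1 := by
  simpa [dyadIco_zero_zero] using dyadIco_succ_eq_preimage i 0 0

lemma dyadIco_succ_subset_dyadIco_one (i : ℕ) {n k : ℕ} (hk : k < 2 ^ n) :
    dyadIco (n + 1) (i * 2 ^ n + k) ⊆ dyadIco 1 i := by
  rw [dyadIco_succ_eq_preimage, dyadIco_one_eq_preimage]
  exact preimage_mono (dyadIco_subset_Ico hk)

lemma dyadAvg_congr {f g : ℝ → ℝ} {n k : ℕ} (h : EqOn f g (dyadIco n k)) :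
    dyadAvg f n k = dyadAvg g n k := by
  rw [dyadAvg, dyadAvg, setIntegral_congr_fun (measurableSet_dyadIco n k) h]

lemma dyadAvg_comp_two_mul_sub (g : ℝ → ℝ) (i n k : ℕ) :
    dyadAvg (fun t => g (2 * t - i)) (n + 1) (i * 2 ^ n + k) = dyadAvg g n k := by
  rw [dyadAvg, dyadIco_succ_eq_preimage, setIntegral_preimage_two_mul_sub, dyadAvg, pow_succ]
  ring

lemma dyadIco_one_zero_union : dyadIco 1 0 ∪ dyadIco 1 1 = Ico (0 : ℝ) 1 := by
  norm_num [dyadIco, Ico_union_Ico_eq_Ico]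

lemma disjoint_dyadIco_one_zero_one : Disjoint (dyadIco 1 0) (dyadIco 1 1) := by
  norm_num [dyadIco, Ico_disjoint_Ico_same]

lemma dyadAvg_zero_zero {g : ℝ → ℝ} (hg : IntegrableOn g (Ico 0 1)) :
    dyadAvg g 0 0 = (dyadAvg g 1 0 + dyadAvg g 1 1) / 2 := by
  rw [← dyadIco_one_zero_union] at hg
  simp only [dyadAvg, dyadIco_zero_zero, ← dyadIco_one_zero_union]
  rw [setIntegral_union disjoint_dyadIco_one_zero_one (measurableSet_dyadIco 1 1)
    (hg.mono_set subset_union_left) (hg.mono_set subset_union_right)]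
  ring

lemma shiftOp_eq_of_mem_dyadIco_one {β α : ℕ → ℕ → ℝ} {g f : ℝ → ℝ} {i : ℕ} {t : ℝ}
    (ht : t ∈ dyadIco 1 i) (hβ : ∀ k, β 0 k = 0) (hα : ∀ n k, 2 ^ n ≤ k → α n k = 0)
    (h : ∀ n k, k < 2 ^ n →
      β (n + 1) (i * 2 ^ n + k) * dyadAvg g (n + 1) (i * 2 ^ n + k) = α n k * dyadAvg f n k) :
    shiftOp β g t = shiftOp α f (2 * t - i) := by
  -- `dyadMem 1 i`, in the shape of `dyadMem_dyadChild_iff` and `mem_range_dyadChild` at `n = k = 0`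
  have hmem : ∀ {n k}, t ∈ dyadIco (n + 1) k → dyadMem (0 + 1) (i * 2 ^ 0 + 0) (n + 1) k :=
    fun hk => by simpa using dyadMem_of_nonempty_inter (by omega) ⟨t, ht, hk⟩
  unfold shiftOp
  rw [← (dyadChild_injective i).tsum_eq]
  · refine tsum_congr fun ⟨n, k⟩ => ?_
    simp only [dyadChild]
    by_cases hk : k < 2 ^ n
    · rw [← h n k hk, dyadIco_succ_eq_preimage]
      rfl
    · have hnot : t ∉ dyadIco (n + 1) (i * 2 ^ n + k) := fun htk =>
        hk (dyadMem_zero_zero_iff.1 ((dyadMem_dyadChild_iff i 0 0 n k).1 (hmem htk)))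
      simp [hα n k (not_lt.1 hk), hnot]
  · rintro ⟨_ | n, k⟩ hp
    · simp [hβ] at hp
    · exact mem_range_dyadChild (hmem (mem_of_indicator_ne_zero (right_ne_zero_of_mul hp)))

def superlevel (α : ℕ → ℕ → ℝ) (f : ℝ → ℝ) : Set ℝ := {t ∈ Ico (0 : ℝ) 1 | 1 < shiftOp α f t}

lemma volume_superlevel_inter_dyadIco_one {β α : ℕ → ℕ → ℝ} {g f : ℝ → ℝ} {i : ℕ} (hi : i < 2)
    (h : ∀ t ∈ dyadIco 1 i, shiftOp β g t = shiftOp α f (2 * t - i)) :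
    volume (superlevel β g ∩ dyadIco 1 i) = volume (superlevel α f) / 2 := by
  have hsub : dyadIco 1 i ⊆ Ico 0 1 := dyadIco_subset_Ico (by simpa using hi)
  rw [← volume_preimage_two_mul_sub i]
  congr 1
  ext t
  simp only [superlevel, mem_inter_iff, mem_ofPred_eq, mem_preimage]
  constructor
  · rintro ⟨⟨-, hS⟩, ht⟩
    rw [h t ht] at hS
    rw [dyadIco_one_eq_preimage] at ht
    exact ⟨ht, hS⟩
  · rintro ⟨ht, hS⟩
    have ht' : t ∈ dyadIco 1 i := by rwa [dyadIco_one_eq_preimage]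
    exact ⟨⟨hsub ht', by rwa [h t ht']⟩, ht'⟩

noncomputable def dyadWeight (α : ℕ → ℕ → ℝ) (p : ℕ × ℕ) : ℝ := α p.1 p.2 * ((2 : ℝ) ^ p.1)⁻¹

lemma totalMass_eq_tsum_dyadWeight (α : ℕ → ℕ → ℝ) : totalMass α = ∑' p, dyadWeight α p := rfl

def dyadSubtree (n k : ℕ) : Set (ℕ × ℕ) := {q | dyadMem n k q.1 q.2}

noncomputable def subtreeMass (α : ℕ → ℕ → ℝ) (n k : ℕ) : ℝ :=
  ∑' p, (dyadSubtree n k).indicator (dyadWeight α) p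

lemma carlesonLeOne_iff {α : ℕ → ℕ → ℝ} :
    CarlesonLeOne α ↔ ∀ n k : ℕ, k < 2 ^ n → subtreeMass α n k ≤ ((2 : ℝ) ^ n)⁻¹ :=
  Iff.rfl

lemma subtreeMass_zero_zero {α : ℕ → ℕ → ℝ} (hα : ∀ n k, 2 ^ n ≤ k → α n k = 0) :
    subtreeMass α 0 0 = totalMass α := by
  refine tsum_congr fun ⟨n, k⟩ => ?_
  by_cases hk : k < 2 ^ n
  · exact indicator_of_mem (s := dyadSubtree 0 0) (dyadMem_zero_zero_iff.2 hk) _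
  · rw [indicator_of_notMem (s := dyadSubtree 0 0) (mt dyadMem_zero_zero_iff.1 hk)]
    simp [hα n k (not_lt.1 hk)]

lemma subtreeMass_dyadChild {β α : ℕ → ℕ → ℝ} (i : ℕ) {n k : ℕ} (hk : k < 2 ^ n)
    (h : ∀ m j, j < 2 ^ m → β (m + 1) (i * 2 ^ m + j) = α m j) :
    subtreeMass β (n + 1) (i * 2 ^ n + k) = subtreeMass α n k / 2 := by
  unfold subtreeMass
  rw [← (dyadChild_injective i).tsum_eq, ← tsum_div_const]
  · refine tsum_congr fun ⟨m, j⟩ => ?_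
    by_cases hmem : dyadMem n k m j
    · have hmem' := (dyadMem_dyadChild_iff i n k m j).2 hmem
      rw [indicator_of_mem (s := dyadSubtree n k) hmem,
        indicator_of_mem (s := dyadSubtree (n + 1) _) hmem']
      simp only [dyadChild, dyadWeight, h m j (hmem.lt_two_pow hk), pow_succ]
      ring
    · have hmem' := mt (dyadMem_dyadChild_iff i n k m j).1 hmem
      rw [indicator_of_notMem (s := dyadSubtree n k) hmem,
        indicator_of_notMem (s := dyadSubtree (n + 1) _) hmem', zero_div]
  · exact fun p hp => mem_range_dyadChild (mem_of_indicator_ne_zero (s := dyadSubtree _ _) hp)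

lemma tsum_add_le_of_nonneg {β : Type*} {u v : β → ℝ} (hu : ∀ b, 0 ≤ u b) (hv : ∀ b, 0 ≤ v b) :
    ∑' b, (u b + v b) ≤ ∑' b, u b + ∑' b, v b := by
  by_cases huv : Summable fun b => u b + v b
  · rw [(huv.of_nonneg_of_le hu fun b => le_add_of_nonneg_right (hv b)).tsum_add
      (huv.of_nonneg_of_le hv fun b => le_add_of_nonneg_left (hu b))]
  · rw [tsum_eq_zero_of_not_summable huv]
    exact add_nonneg (tsum_nonneg hu) (tsum_nonneg hv)

lemma tsum_add_of_nonneg {β : Type*} {u v : β → ℝ} (hu : ∀ b, 0 ≤ u b) (hv : ∀ b, 0 ≤ v b)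
    (h : Summable u ∧ Summable v ∨ ∑' b, u b = 0 ∧ ∑' b, v b = 0) :
    ∑' b, (u b + v b) = ∑' b, u b + ∑' b, v b := by
  obtain ⟨hsu, hsv⟩ | ⟨hu0, hv0⟩ := h
  · exact hsu.tsum_add hsv
  · refine le_antisymm (tsum_add_le_of_nonneg hu hv) ?_
    rw [hu0, hv0, zero_add]
    exact tsum_nonneg fun b => add_nonneg (hu b) (hv b)

lemma tsum_extend_dyadChild (i : ℕ) (α : ℕ → ℕ → ℝ) :
    ∑' p, extend (dyadChild i) (fun p => dyadWeight α p / 2) 0 p = totalMass α / 2 := by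
  rw [tsum_extend_zero (dyadChild_injective i), tsum_div_const]
  rfl

lemma dyadWeight_nonneg {α : ℕ → ℕ → ℝ} (hα : ∀ n k, 0 ≤ α n k) (p : ℕ × ℕ) :
    0 ≤ dyadWeight α p :=
  mul_nonneg (hα _ _) (by positivity)

noncomputable def glueFun (f₁ f₂ : ℝ → ℝ) (t : ℝ) : ℝ :=
  if t < 1 / 2 then f₁ (2 * t) else f₂ (2 * t - 1)

def glueSeq (α₁ α₂ : ℕ → ℕ → ℝ) : ℕ → ℕ → ℝ
  | 0, _ => 0
  | n + 1, k => if k < 2 ^ n then α₁ n k else α₂ n (k - 2 ^ n)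

section Glue

variable {f₁ f₂ : ℝ → ℝ} {α₁ α₂ : ℕ → ℕ → ℝ}

lemma glueFun_of_mem_left {t : ℝ} (ht : t ∈ dyadIco 1 0) : glueFun f₁ f₂ t = f₁ (2 * t) := by
  simp_all [glueFun, dyadIco]

lemma glueFun_of_mem_right {t : ℝ} (ht : t ∈ dyadIco 1 1) :
    glueFun f₁ f₂ t = f₂ (2 * t - 1) := by
  simp_all [glueFun, dyadIco]

lemma dyadAvg_glueFun_left {n k : ℕ} (hk : k < 2 ^ n) :
    dyadAvg (glueFun f₁ f₂) (n + 1) k = dyadAvg f₁ n k := by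
  have hsub := dyadIco_succ_subset_dyadIco_one 0 hk
  simp only [zero_mul, zero_add] at hsub
  have hchild := dyadAvg_comp_two_mul_sub f₁ 0 n k
  simp only [Nat.cast_zero, sub_zero, zero_mul, zero_add] at hchild
  exact (dyadAvg_congr fun t ht => glueFun_of_mem_left (hsub ht)).trans hchild

lemma dyadAvg_glueFun_right {n k : ℕ} (hk : k < 2 ^ n) :
    dyadAvg (glueFun f₁ f₂) (n + 1) (2 ^ n + k) = dyadAvg f₂ n k := by
  have hsub := dyadIco_succ_subset_dyadIco_one 1 hk
  simp only [one_mul] at hsub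
  have hchild := dyadAvg_comp_two_mul_sub f₂ 1 n k
  simp only [Nat.cast_one, one_mul] at hchild
  exact (dyadAvg_congr fun t ht => glueFun_of_mem_right (hsub ht)).trans hchild

lemma glueSeq_nonneg (h₁ : ∀ n k, 0 ≤ α₁ n k) (h₂ : ∀ n k, 0 ≤ α₂ n k) (n k : ℕ) :
    0 ≤ glueSeq α₁ α₂ n k := by
  cases n with
  | zero => exact le_rfl
  | succ n => rw [glueSeq]; split_ifs <;> simp [h₁, h₂]

lemma glueSeq_eq_zero (h₂ : ∀ n k, 2 ^ n ≤ k → α₂ n k = 0) {n k : ℕ} (hk : 2 ^ n ≤ k) :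
    glueSeq α₁ α₂ n k = 0 := by
  cases n with
  | zero => rfl
  | succ n =>
    have : ¬k < 2 ^ n := by rw [pow_succ] at hk; omega
    rw [glueSeq, if_neg this, h₂ _ _ (by rw [pow_succ] at hk; omega)]

lemma dyadWeight_glueSeq (h₁ : ∀ n k, 2 ^ n ≤ k → α₁ n k = 0) :
    dyadWeight (glueSeq α₁ α₂) = extend (dyadChild 0) (fun p => dyadWeight α₁ p / 2) 0 +
      extend (dyadChild 1) (fun p => dyadWeight α₂ p / 2) 0 := by
  have hw : ∀ (α : ℕ → ℕ → ℝ) n k, α n k * ((2 : ℝ) ^ (n + 1))⁻¹ = dyadWeight α (n, k) / 2 := by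
    intro α n k; rw [dyadWeight, pow_succ]; ring
  ext ⟨_ | n, k⟩
  · have : ∀ i, (0, k) ∉ range (dyadChild i) := by rintro i ⟨p, hp⟩; simp [dyadChild] at hp
    simp [dyadWeight, glueSeq, extend_apply' _ _ _ (fun h => this 0 h),
      extend_apply' _ _ _ (fun h => this 1 h)]
  · rw [Pi.add_apply]
    by_cases hk : k < 2 ^ n
    · have e₀ := (dyadChild_injective 0).extend_apply (fun p => dyadWeight α₁ p / 2) 0 (n, k)
      have e₁ : extend (dyadChild 1) (fun p => dyadWeight α₂ p / 2) 0 (n + 1, k) = 0 := by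
        refine extend_apply' _ _ _ ?_
        rintro ⟨⟨m, j⟩, hp⟩
        simp only [dyadChild, Prod.mk.injEq] at hp
        obtain ⟨hm, hj⟩ := hp
        obtain rfl : m = n := by omega
        omega
      simp only [dyadChild, zero_mul, zero_add] at e₀
      show glueSeq α₁ α₂ (n + 1) k * ((2 : ℝ) ^ (n + 1))⁻¹ = _
      rw [e₀, e₁, glueSeq, if_pos hk, hw, add_zero]
    · obtain ⟨j, rfl⟩ := Nat.exists_eq_add_of_le (not_lt.1 hk)
      have e₀ :=
        (dyadChild_injective 0).extend_apply (fun p => dyadWeight α₁ p / 2) 0 (n, 2 ^ n + j)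
      have e₁ := (dyadChild_injective 1).extend_apply (fun p => dyadWeight α₂ p / 2) 0 (n, j)
      simp only [dyadChild, zero_mul, zero_add, one_mul] at e₀ e₁
      show glueSeq α₁ α₂ (n + 1) (2 ^ n + j) * ((2 : ℝ) ^ (n + 1))⁻¹ = _
      rw [e₀, e₁, glueSeq, if_neg hk, add_tsub_cancel_left, hw]
      simp [dyadWeight, h₁ n _ le_self_add]

lemma totalMass_glueSeq_eq_tsum_add (h₁ : ∀ n k, 2 ^ n ≤ k → α₁ n k = 0) :
    totalMass (glueSeq α₁ α₂) = ∑' p, (extend (dyadChild 0) (fun p => dyadWeight α₁ p / 2) 0 p +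
      extend (dyadChild 1) (fun p => dyadWeight α₂ p / 2) 0 p) :=
  congrArg tsum (dyadWeight_glueSeq h₁)

lemma totalMass_glueSeq_le (hn₁ : ∀ n k, 0 ≤ α₁ n k) (hn₂ : ∀ n k, 0 ≤ α₂ n k)
    (h₁ : ∀ n k, 2 ^ n ≤ k → α₁ n k = 0) :
    totalMass (glueSeq α₁ α₂) ≤ (totalMass α₁ + totalMass α₂) / 2 := by
  rw [totalMass_glueSeq_eq_tsum_add h₁, add_div, ← tsum_extend_dyadChild 0,
    ← tsum_extend_dyadChild 1]
  exact tsum_add_le_of_nonneg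
    (extend_nonneg (fun p => div_nonneg (dyadWeight_nonneg hn₁ p) zero_le_two) le_rfl)
    (extend_nonneg (fun p => div_nonneg (dyadWeight_nonneg hn₂ p) zero_le_two) le_rfl)

-- A non-summable `tsum` is `0`: gluing a non-summable `α₁` to an `α₂` of positive mass would
-- lose the mass of `α₂`.
lemma totalMass_glueSeq (hn₁ : ∀ n k, 0 ≤ α₁ n k) (hn₂ : ∀ n k, 0 ≤ α₂ n k)
    (h₁ : ∀ n k, 2 ^ n ≤ k → α₁ n k = 0)
    (h : Summable (dyadWeight α₁) ∧ Summable (dyadWeight α₂) ∨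
      totalMass α₁ = 0 ∧ totalMass α₂ = 0) :
    totalMass (glueSeq α₁ α₂) = (totalMass α₁ + totalMass α₂) / 2 := by
  rw [totalMass_glueSeq_eq_tsum_add h₁, add_div, ← tsum_extend_dyadChild 0,
    ← tsum_extend_dyadChild 1]
  refine tsum_add_of_nonneg
    (extend_nonneg (fun p => div_nonneg (dyadWeight_nonneg hn₁ p) zero_le_two) le_rfl)
    (extend_nonneg (fun p => div_nonneg (dyadWeight_nonneg hn₂ p) zero_le_two) le_rfl) ?_
  simp only [tsum_extend_dyadChild, summable_extend_zero (dyadChild_injective _), div_eq_zero_iff,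
    two_ne_zero, or_false]
  exact h.imp_left fun ⟨s₁, s₂⟩ => ⟨s₁.div_const 2, s₂.div_const 2⟩

lemma carlesonLeOne_glueSeq (hn₁ : ∀ n k, 0 ≤ α₁ n k) (hn₂ : ∀ n k, 0 ≤ α₂ n k)
    (h₁ : ∀ n k, 2 ^ n ≤ k → α₁ n k = 0) (h₂ : ∀ n k, 2 ^ n ≤ k → α₂ n k = 0)
    (hC₁ : CarlesonLeOne α₁) (hC₂ : CarlesonLeOne α₂) : CarlesonLeOne (glueSeq α₁ α₂) := by
  rw [carlesonLeOne_iff] at *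
  rintro (_ | n) k hk
  · obtain rfl : k = 0 := by simpa using hk
    have hM₁ := hC₁ 0 0 one_pos
    have hM₂ := hC₂ 0 0 one_pos
    rw [subtreeMass_zero_zero h₁] at hM₁
    rw [subtreeMass_zero_zero h₂] at hM₂
    rw [subtreeMass_zero_zero fun n k => glueSeq_eq_zero h₂]
    norm_num at hM₁ hM₂ ⊢
    linarith [totalMass_glueSeq_le hn₁ hn₂ h₁]
  · have hhalf : ((2 : ℝ) ^ n)⁻¹ / 2 = ((2 : ℝ) ^ (n + 1))⁻¹ := by rw [pow_succ]; ring
    by_cases hkn : k < 2 ^ n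
    · have := subtreeMass_dyadChild (β := glueSeq α₁ α₂) (α := α₁) 0 hkn
        fun m j hj => by simp [glueSeq, hj]
      simp only [zero_mul, zero_add] at this
      rw [this, ← hhalf]
      exact div_le_div_of_nonneg_right (hC₁ n k hkn) zero_le_two
    · obtain ⟨j, rfl⟩ := Nat.exists_eq_add_of_le (not_lt.1 hkn)
      have hj : j < 2 ^ n := by rw [pow_succ] at hk; omega
      have := subtreeMass_dyadChild (β := glueSeq α₁ α₂) (α := α₂) 1 hj
        fun m j hj => by simp [glueSeq]
      simp only [one_mul] at this
      rw [this, ← hhalf]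
      exact div_le_div_of_nonneg_right (hC₂ n j hj) zero_le_two

lemma volume_superlevel_glue (h₁ : ∀ n k, 2 ^ n ≤ k → α₁ n k = 0)
    (h₂ : ∀ n k, 2 ^ n ≤ k → α₂ n k = 0) :
    volume (superlevel (glueSeq α₁ α₂) (glueFun f₁ f₂)) =
      (volume (superlevel α₁ f₁) + volume (superlevel α₂ f₂)) / 2 := by
  set S := superlevel (glueSeq α₁ α₂) (glueFun f₁ f₂)
  have left : volume (S ∩ dyadIco 1 0) = volume (superlevel α₁ f₁) / 2 :=
    volume_superlevel_inter_dyadIco_one (by norm_num) fun t ht =>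
      shiftOp_eq_of_mem_dyadIco_one ht (fun _ => rfl) h₁ fun n k hk => by
        simp [glueSeq, hk, dyadAvg_glueFun_left hk]
  have right : volume (S ∩ dyadIco 1 1) = volume (superlevel α₂ f₂) / 2 :=
    volume_superlevel_inter_dyadIco_one (by norm_num) fun t ht =>
      shiftOp_eq_of_mem_dyadIco_one ht (fun _ => rfl) h₂ fun n k hk => by
        simp [glueSeq, dyadAvg_glueFun_right hk]
  have hdiff : S \ dyadIco 1 0 = S ∩ dyadIco 1 1 := by
    ext t
    simp only [S, superlevel, dyadIco, Set.mem_sdiff, mem_inter_iff, mem_ofPred_eq, mem_Ico]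
    norm_num
    exact fun h₀ h₁ _ => ⟨fun h => ⟨h h₀, h₁⟩, fun h _ => h.1⟩
  rw [← measure_inter_add_sdiff _ (measurableSet_dyadIco 1 0), hdiff, left, right, ENNReal.add_div]

lemma integrableOn_glueFun (h₁ : IntegrableOn f₁ (Ico 0 1)) (h₂ : IntegrableOn f₂ (Ico 0 1)) :
    IntegrableOn (glueFun f₁ f₂) (Ico 0 1) := by
  rw [← dyadIco_one_zero_union]
  refine IntegrableOn.union ?_ ?_
  · have := integrableOn_comp_two_mul_sub h₁ ((0 : ℕ) : ℝ)
    rw [← dyadIco_one_eq_preimage] at this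
    exact this.congr_fun (fun t ht => by simp [glueFun_of_mem_left ht])
      (measurableSet_dyadIco 1 0)
  · have := integrableOn_comp_two_mul_sub h₂ ((1 : ℕ) : ℝ)
    rw [← dyadIco_one_eq_preimage] at this
    exact this.congr_fun (fun t ht => by simp [glueFun_of_mem_right ht])
      (measurableSet_dyadIco 1 1)

lemma dyadAvg_glueFun_zero_zero (h₁ : IntegrableOn f₁ (Ico 0 1))
    (h₂ : IntegrableOn f₂ (Ico 0 1)) :
    dyadAvg (glueFun f₁ f₂) 0 0 = (dyadAvg f₁ 0 0 + dyadAvg f₂ 0 0) / 2 := by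
  have hright := dyadAvg_glueFun_right (f₁ := f₁) (f₂ := f₂) (n := 0) (k := 0) one_pos
  rw [pow_zero, add_zero] at hright
  rw [dyadAvg_zero_zero (integrableOn_glueFun h₁ h₂), dyadAvg_glueFun_left one_pos, hright]

theorem Admissible.glue {x₁ y₁ x₂ y₂ : ℝ} (hA₁ : Admissible x₁ y₁ f₁ α₁)
    (hA₂ : Admissible x₂ y₂ f₂ α₂)
    (h : Summable (dyadWeight α₁) ∧ Summable (dyadWeight α₂) ∨ y₁ = 0 ∧ y₂ = 0) :
    Admissible ((x₁ + x₂) / 2) ((y₁ + y₂) / 2) (glueFun f₁ f₂) (glueSeq α₁ α₂) := by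
  obtain ⟨hf₁, hi₁, rfl, hn₁, hz₁, hC₁, rfl⟩ := hA₁
  obtain ⟨hf₂, hi₂, rfl, hn₂, hz₂, hC₂, rfl⟩ := hA₂
  refine ⟨fun t => ?_, integrableOn_glueFun hi₁ hi₂, dyadAvg_glueFun_zero_zero hi₁ hi₂,
    glueSeq_nonneg hn₁ hn₂, fun n k => glueSeq_eq_zero hz₂,
    carlesonLeOne_glueSeq hn₁ hn₂ hz₁ hz₂ hC₁ hC₂, totalMass_glueSeq hn₁ hn₂ hz₁ h⟩
  unfold glueFun
  split_ifs
  exacts [hf₁ _, hf₂ _]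

end Glue

lemma Admissible.summable_dyadWeight {x y : ℝ} {f : ℝ → ℝ} {α : ℕ → ℕ → ℝ}
    (h : Admissible x y f α) (hy : y ≠ 0) : Summable (dyadWeight α) := by
  obtain ⟨-, -, -, -, -, -, rfl⟩ := h
  by_contra hs
  exact hy (tsum_eq_zero_of_not_summable hs)

lemma admissible_zero : Admissible 0 0 0 0 := by
  refine ⟨fun _ => le_rfl, integrableOn_zero, by simp [dyadAvg], fun _ _ => le_rfl,
    fun _ _ _ => rfl, fun n k _ => ?_, by simp [totalMass]⟩
  simp

lemma superlevel_zero : superlevel 0 0 = ∅ := by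
  ext t
  simp [superlevel, shiftOp]

lemma admissible_root {x y : ℝ} (hx : 0 ≤ x) (hy : 0 ≤ y) (hy₁ : y ≤ 1) :
    Admissible x y (fun _ => x) (fun n k => if n = 0 ∧ k = 0 then y else 0) := by
  have hw : dyadWeight (fun n k => if n = 0 ∧ k = 0 then y else 0) =
      fun p => if p = (0, 0) then y else 0 := by
    ext ⟨n, k⟩
    by_cases h : n = 0 ∧ k = 0
    · obtain ⟨rfl, rfl⟩ := h
      simp [dyadWeight]
    · simp [dyadWeight, h, Prod.ext_iff]
  refine ⟨fun _ => hx, integrableOn_const measure_Ico_lt_top.ne, by simp [dyadAvg, dyadIco],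
    fun n k => ?_, fun n k hk => if_neg ?_, carlesonLeOne_iff.2 fun n k _ => ?_, ?_⟩
  · dsimp only
    split_ifs <;> simp [hy]
  · rintro ⟨rfl, rfl⟩
    simp at hk
  · rw [subtreeMass, hw, tsum_eq_single (0, 0) fun p hp => by simp [hp]]
    by_cases h : dyadMem n k 0 0
    · obtain rfl : n = 0 := Nat.le_zero.1 h.1
      simpa [indicator_of_mem (s := dyadSubtree 0 k) (a := (0, 0)) h] using hy₁
    · simp [indicator_of_notMem (s := dyadSubtree n k) (a := (0, 0)) h]
  · rw [totalMass_eq_tsum_dyadWeight, hw, tsum_ite_eq]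

def bellmanValues (x y : ℝ) : Set ℝ :=
  {r | ∃ f α, Admissible x y f α ∧ r = (volume (superlevel α f)).toReal}

lemma bellmanE_eq_sSup (x y : ℝ) : BellmanE x y = sSup (bellmanValues x y) := rfl

lemma volume_superlevel_le_one (α : ℕ → ℕ → ℝ) (f : ℝ → ℝ) : volume (superlevel α f) ≤ 1 :=
  (measure_mono fun _ ht => ht.1).trans (by simp)

lemma bellmanValues_subset_Icc (x y : ℝ) : bellmanValues x y ⊆ Icc 0 1 := by
  rintro r ⟨f, α, -, rfl⟩
  exact ⟨ENNReal.toReal_nonneg, ENNReal.toReal_le_of_le_ofReal zero_le_one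
    (by simpa using volume_superlevel_le_one α f)⟩

lemma bddAbove_bellmanValues (x y : ℝ) : BddAbove (bellmanValues x y) :=
  ⟨1, fun _ hr => (bellmanValues_subset_Icc x y hr).2⟩

lemma bellmanE_nonneg (x y : ℝ) : 0 ≤ BellmanE x y :=
  Real.sSup_nonneg fun _ hr => (bellmanValues_subset_Icc x y hr).1

lemma bellmanValues_nonempty {x y : ℝ} (hx : 0 ≤ x) (hy : 0 ≤ y) (hy₁ : y ≤ 1) :
    (bellmanValues x y).Nonempty :=
  ⟨_, _, _, admissible_root hx hy hy₁, rfl⟩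

lemma glue_mem_bellmanValues {x₁ y₁ x₂ y₂ : ℝ} {f₁ f₂ : ℝ → ℝ} {α₁ α₂ : ℕ → ℕ → ℝ}
    (hA₁ : Admissible x₁ y₁ f₁ α₁) (hA₂ : Admissible x₂ y₂ f₂ α₂)
    (h : Summable (dyadWeight α₁) ∧ Summable (dyadWeight α₂) ∨ y₁ = 0 ∧ y₂ = 0) :
    ((volume (superlevel α₁ f₁)).toReal + (volume (superlevel α₂ f₂)).toReal) / 2 ∈
      bellmanValues ((x₁ + x₂) / 2) ((y₁ + y₂) / 2) := by
  refine ⟨_, _, hA₁.glue hA₂ h, ?_⟩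
  obtain ⟨-, -, -, -, hz₁, -⟩ := hA₁
  obtain ⟨-, -, -, -, hz₂, -⟩ := hA₂
  rw [volume_superlevel_glue hz₁ hz₂, ENNReal.toReal_div,
    ENNReal.toReal_add (ne_top_of_le_ne_top ENNReal.one_ne_top (volume_superlevel_le_one _ _))
      (ne_top_of_le_ne_top ENNReal.one_ne_top (volume_superlevel_le_one _ _))]
  rfl

lemma half_mem_bellmanValues {x y r : ℝ} (hr : r ∈ bellmanValues x y) :
    r / 2 ∈ bellmanValues (x / 2) (y / 2) := by
  obtain ⟨f, α, hA, rfl⟩ := hr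
  have h : Summable (dyadWeight α) ∧ Summable (dyadWeight 0) ∨ y = 0 ∧ (0 : ℝ) = 0 := by
    by_cases hy : y = 0
    · exact Or.inr ⟨hy, rfl⟩
    · exact Or.inl ⟨hA.summable_dyadWeight hy, summable_zero.congr fun p => by simp [dyadWeight]⟩
  simpa [superlevel_zero] using glue_mem_bellmanValues hA admissible_zero h

lemma midpoint_mem_bellmanValues {x₁ y₁ x₂ y₂ r₁ r₂ : ℝ} (hr₁ : r₁ ∈ bellmanValues x₁ y₁)
    (hr₂ : r₂ ∈ bellmanValues x₂ y₂) (hy : y₁ = 0 ↔ y₂ = 0) :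
    (r₁ + r₂) / 2 ∈ bellmanValues ((x₁ + x₂) / 2) ((y₁ + y₂) / 2) := by
  obtain ⟨f₁, α₁, hA₁, rfl⟩ := hr₁
  obtain ⟨f₂, α₂, hA₂, rfl⟩ := hr₂
  refine glue_mem_bellmanValues hA₁ hA₂ ?_
  by_cases hy₁ : y₁ = 0
  · exact Or.inr ⟨hy₁, hy.1 hy₁⟩
  · exact Or.inl ⟨hA₁.summable_dyadWeight hy₁, hA₂.summable_dyadWeight (mt hy.2 hy₁)⟩

lemma bellmanE_half_le (x y : ℝ) : BellmanE x y / 2 ≤ BellmanE (x / 2) (y / 2) := by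
  rcases (bellmanValues x y).eq_empty_or_nonempty with h | h
  · rw [bellmanE_eq_sSup x y, h, Real.sSup_empty, zero_div]
    exact bellmanE_nonneg _ _
  · rw [div_le_iff₀ two_pos]
    refine csSup_le h fun r hr => ?_
    have := le_csSup (bddAbove_bellmanValues _ _) (half_mem_bellmanValues hr)
    rw [← bellmanE_eq_sSup] at this
    linarith

lemma bellmanE_midpoint_le {x₁ y₁ x₂ y₂ : ℝ} (hne₁ : (bellmanValues x₁ y₁).Nonempty)
    (hne₂ : (bellmanValues x₂ y₂).Nonempty) (hy : y₁ = 0 ↔ y₂ = 0) :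
    (BellmanE x₁ y₁ + BellmanE x₂ y₂) / 2 ≤ BellmanE ((x₁ + x₂) / 2) ((y₁ + y₂) / 2) := by
  rw [div_le_iff₀ two_pos, ← le_sub_iff_add_le]
  refine csSup_le hne₁ fun r₁ hr₁ => le_sub_comm.1 (csSup_le hne₂ fun r₂ hr₂ => ?_)
  rw [le_sub_iff_add_le']
  have := le_csSup (bddAbove_bellmanValues _ _) (midpoint_mem_bellmanValues hr₁ hr₂ hy)
  rw [← bellmanE_eq_sSup] at this
  linarith

/-- Superlinearity of the Bellman function `E(x,y) = 𝔹(x,y,1)` along rays through the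
origin: for `λ ∈ (0,1]`, `E(x,y) ≥ λ E(x/λ, y/λ)` whenever `(x/λ, y/λ)` lies in the
domain `[0,∞) × [0,1]`. -/
theorem bellman_superlinear (x y l : ℝ) (hx : 0 ≤ x) (hy : 0 ≤ y) (hl : 0 < l)
    (hl1 : l ≤ 1) (hyl : y ≤ l) :
    l * BellmanE (x / l) (y / l) ≤ BellmanE x y := by
  have hne : ∀ a ∈ Icc (0 : ℝ) 1, (bellmanValues (a * (x / l)) (a * (y / l))).Nonempty :=
    fun a ha => bellmanValues_nonempty (mul_nonneg ha.1 (div_nonneg hx hl.le))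
      (mul_nonneg ha.1 (div_nonneg hy hl.le)) (mul_le_one₀ ha.2 (div_nonneg hy hl.le)
      ((div_le_one hl).2 hyl))
  have hray :=
    mul_le_of_half_le_of_midpoint_le (g := fun a => BellmanE (a * (x / l)) (a * (y / l)))
    (fun _ _ => bellmanE_nonneg _ _)
    (fun a _ => by convert bellmanE_half_le (a * (x / l)) (a * (y / l)) using 2 <;> ring)
    (fun a ha => by
      convert bellmanE_midpoint_le (hne 1 ⟨zero_le_one, le_rfl⟩) (hne a ⟨ha.1.le, ha.2⟩)
        (by rw [one_mul, mul_eq_zero, or_iff_right ha.1.ne']) using 2 <;> ring)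
    ⟨hl.le, hl1⟩
  simpa [mul_div_cancel₀ _ hl.ne'] using hray
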